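/- Define H(ξ) = −(1−ξ)log(1−ξ) + 4ξ log[(1+ξ+√(1−2ξ+5ξ²))/(1−ξ+√(1−2ξ+5ξ²))] − (1+ξ) log[(1+3ξ²+(ξ+1)√(1−2ξ+5ξ²))/(1−ξ+√(1−2ξ+5ξ²))] for ξ ∈ (0,1). Then H(ξ) → 0 as ξ → 0⁺ and as ξ → 1⁻, and H attains a maximum value greater than 0.253 on (0,1) (at ξ ≈ 0.7395). -/

import Mathlib

open Real

/-- The exponent function `𝓗` from the second-moment analysis. -/
noncomputable def calH (ξ : ℝ) : ℝ :=
  -(1 - ξ) * Real.log (1 - ξ)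
    + 4 * ξ * Real.log ((1 + ξ + Real.sqrt (1 - 2*ξ + 5*ξ^2))
        / (1 - ξ + Real.sqrt (1 - 2*ξ + 5*ξ^2)))
    - (1 + ξ) * Real.log ((1 + 3*ξ^2 + (ξ + 1) * Real.sqrt (1 - 2*ξ + 5*ξ^2))
        / (1 - ξ + Real.sqrt (1 - 2*ξ + 5*ξ^2)))

/-- Padé lower bound for the logarithm. -/
lemma pade_lo {x : ℝ} (hx : 1 ≤ x) : 2*(x-1)/(x+1) ≤ Real.log x := by
  set f : ℝ → ℝ := fun x => Real.log x - 2*(x-1)/(x+1) with hf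
  have hder : ∀ y : ℝ, 0 < y → HasDerivAt f (1/y - 4/(y+1)^2) y := by
    intro y hy
    have h1 : HasDerivAt Real.log (1/y) y := by
      simpa [one_div] using Real.hasDerivAt_log (ne_of_gt hy)
    have hnum : HasDerivAt (fun x : ℝ => 2*(x-1)) 2 x := by
      simpa using ((hasDerivAt_id x).sub_const 1).const_mul 2
    have h2 : HasDerivAt (fun x : ℝ => 2*(x-1)/(x+1)) (4/(y+1)^2) y := by
      have hnum : HasDerivAt (fun x : ℝ => 2*(x-1)) 2 y := by
        simpa using ((hasDerivAt_id y).sub_const 1).const_mul 2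
      have hden : HasDerivAt (fun x : ℝ => x+1) 1 y := (hasDerivAt_id y).add_const 1
      have := hnum.div hden (by linarith : y + 1 ≠ 0)
      refine this.congr_deriv ?_
      ring
    exact h1.sub h2
  have hmono : MonotoneOn f (Set.Ici 1) := by
    apply monotoneOn_of_hasDerivWithinAt_nonneg (convex_Ici 1)
      (fun y hy => ((hder y (by simp at hy; linarith)).continuousAt).continuousWithinAt)
      (f' := fun y => 1/y - 4/(y+1)^2)
    · intro y hy
      rw [interior_Ici] at hy
      exact ((hder y (by simp at hy; linarith)).hasDerivWithinAt)
    · intro y hy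
      rw [interior_Ici] at hy
      simp only [Set.mem_Ioi] at hy
      rw [sub_nonneg, div_le_div_iff₀ (by positivity) (by linarith)]
      nlinarith [sq_nonneg (y - 1)]
  have h0 : f 1 = 0 := by simp [hf]
  have := hmono (Set.self_mem_Ici) (Set.mem_Ici.2 hx) hx
  rw [h0] at this
  simp only [hf] at this
  linarith

/-- Padé upper bound for the logarithm. -/
lemma pade_hi {x : ℝ} (hx : 1 ≤ x) : Real.log x ≤ (x^2-1)/(2*x) := by
  set f : ℝ → ℝ := fun x => (x^2-1)/(2*x) - Real.log x with hf
  have hder : ∀ y : ℝ, 0 < y → HasDerivAt f ((2*y^2+2)/(4*y^2) - 1/y) y := by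
    intro y hy
    have h1 : HasDerivAt Real.log (1/y) y := by
      simpa [one_div] using Real.hasDerivAt_log (ne_of_gt hy)
    have h2 : HasDerivAt (fun x : ℝ => (x^2-1)/(2*x)) ((2*y^2+2)/(4*y^2)) y := by
      have hnum : HasDerivAt (fun x : ℝ => x^2-1) (2*y) y := by
        simpa using ((hasDerivAt_pow 2 y).sub_const 1)
      have hden : HasDerivAt (fun x : ℝ => 2*x) 2 y := by
        simpa using (hasDerivAt_id y).const_mul 2
      have := hnum.div hden (by positivity : 2*y ≠ 0)
      refine this.congr_deriv ?_
      ring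
    exact h2.sub h1
  have hmono : MonotoneOn f (Set.Ici 1) := by
    apply monotoneOn_of_hasDerivWithinAt_nonneg (convex_Ici 1)
      (fun y hy => ((hder y (by simp at hy; linarith)).continuousAt).continuousWithinAt)
      (f' := fun y => (2*y^2+2)/(4*y^2) - 1/y)
    · intro y hy
      rw [interior_Ici] at hy
      exact ((hder y (by simp at hy; linarith)).hasDerivWithinAt)
    · intro y hy
      rw [interior_Ici] at hy
      simp only [Set.mem_Ioi] at hy
      rw [sub_nonneg, div_le_div_iff₀ (by linarith) (by positivity)]
      nlinarith [sq_nonneg (y - 1)]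
  have h0 : f 1 = 0 := by norm_num [hf]
  have := hmono (Set.self_mem_Ici) (Set.mem_Ici.2 hx) hx
  rw [h0] at this
  simp only [hf] at this
  linarith

/-- A rational lower bound on a logarithm via a 256-th root certificate. -/
lemma log_ge_cert {X r : ℝ} (hr : 1 ≤ r) (h : r^(256:ℕ) ≤ X) :
    512*(r-1)/(r+1) ≤ Real.log X := by
  have hr0 : (0:ℝ) < r := by linarith
  have hpow : (0:ℝ) < r ^ (256:ℕ) := by positivity
  calc 512*(r-1)/(r+1) = 256*(2*(r-1)/(r+1)) := by ring
    _ ≤ 256 * Real.log r := by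
        have := pade_lo hr
        nlinarith
    _ = Real.log (r^(256:ℕ)) := by rw [Real.log_pow]; norm_num
    _ ≤ Real.log X := Real.log_le_log hpow h

/-- A rational upper bound on a logarithm via a 256-th root certificate. -/
lemma log_le_cert {X r : ℝ} (hr : 1 ≤ r) (hX : 0 < X) (h : X ≤ r^(256:ℕ)) :
    Real.log X ≤ 128*(r^2-1)/r := by
  have hr0 : (0:ℝ) < r := by linarith
  calc Real.log X ≤ Real.log (r^(256:ℕ)) := Real.log_le_log hX h
    _ = 256 * Real.log r := by rw [Real.log_pow]; norm_num
    _ ≤ 256 * ((r^2-1)/(2*r)) := by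
        have := pade_hi hr
        nlinarith
    _ = 128*(r^2-1)/r := by field_simp; ring

/-- `calH` rewritten in a form manifestly continuous at `ξ = 1`. -/
lemma calH_eq (ξ : ℝ) : calH ξ =
    -((1 - ξ) * Real.log (1 - ξ))
    + 4 * ξ * Real.log ((1 + ξ + Real.sqrt (1 - 2*ξ + 5*ξ^2))
        / (1 - ξ + Real.sqrt (1 - 2*ξ + 5*ξ^2)))
    - (1 + ξ) * Real.log ((1 + 3*ξ^2 + (ξ + 1) * Real.sqrt (1 - 2*ξ + 5*ξ^2))
        / (1 - ξ + Real.sqrt (1 - 2*ξ + 5*ξ^2))) := by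
  unfold calH; ring

lemma calH_contAt {ξ : ℝ} (h0 : 0 ≤ ξ) (h1 : ξ ≤ 1) : ContinuousAt calH ξ := by
  have hq : (0:ℝ) < 1 - 2*ξ + 5*ξ^2 := by nlinarith
  have hs0 : 0 < Real.sqrt (1 - 2*ξ + 5*ξ^2) := Real.sqrt_pos.2 hq
  have hden : 0 < 1 - ξ + Real.sqrt (1 - 2*ξ + 5*ξ^2) := by linarith
  have hscont : Continuous fun ξ : ℝ => Real.sqrt (1 - 2*ξ + 5*ξ^2) := by
    apply Real.continuous_sqrt.comp
    continuity
  have hc2num : ContinuousAt (fun ξ : ℝ => 1 + ξ + Real.sqrt (1 - 2*ξ + 5*ξ^2)) ξ := by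
    exact ((continuous_const.add continuous_id).add hscont).continuousAt
  have hc3num : ContinuousAt (fun ξ : ℝ => 1 + 3*ξ^2 + (ξ + 1) * Real.sqrt (1 - 2*ξ + 5*ξ^2)) ξ := by
    exact ((continuous_const.add (continuous_const.mul (continuous_pow 2))).add
      ((continuous_id.add continuous_const).mul hscont)).continuousAt
  have hcden : ContinuousAt (fun ξ : ℝ => 1 - ξ + Real.sqrt (1 - 2*ξ + 5*ξ^2)) ξ := by
    exact ((continuous_const.sub continuous_id).add hscont).continuousAt
  have hR2pos : (0:ℝ) < (1 + ξ + Real.sqrt (1 - 2*ξ + 5*ξ^2))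
      / (1 - ξ + Real.sqrt (1 - 2*ξ + 5*ξ^2)) := by
    apply div_pos (by linarith) hden
  have hR3pos : (0:ℝ) < (1 + 3*ξ^2 + (ξ + 1) * Real.sqrt (1 - 2*ξ + 5*ξ^2))
      / (1 - ξ + Real.sqrt (1 - 2*ξ + 5*ξ^2)) := by
    apply div_pos (by nlinarith) hden
  have heq : calH = fun ξ : ℝ =>
      -((1 - ξ) * Real.log (1 - ξ))
      + 4 * ξ * Real.log ((1 + ξ + Real.sqrt (1 - 2*ξ + 5*ξ^2))
          / (1 - ξ + Real.sqrt (1 - 2*ξ + 5*ξ^2)))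
      - (1 + ξ) * Real.log ((1 + 3*ξ^2 + (ξ + 1) * Real.sqrt (1 - 2*ξ + 5*ξ^2))
          / (1 - ξ + Real.sqrt (1 - 2*ξ + 5*ξ^2))) := funext calH_eq
  rw [heq]
  apply ContinuousAt.sub
  apply ContinuousAt.add
  · exact (ContinuousAt.neg ((Real.continuous_mul_log.comp
      (continuous_const.sub continuous_id)).continuousAt))
  · exact ((continuous_const.mul continuous_id).continuousAt).mul
      (ContinuousAt.log ((hc2num.div hcden (ne_of_gt hden))) (ne_of_gt hR2pos))
  · exact ((continuous_const.add continuous_id).continuousAt).mul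
      (ContinuousAt.log ((hc3num.div hcden (ne_of_gt hden))) (ne_of_gt hR3pos))

lemma calH_zero : calH 0 = 0 := by
  unfold calH
  norm_num [Real.sqrt_one]

lemma calH_one : calH 1 = 0 := by
  have h4 : Real.sqrt (1 - 2*1 + 5*1^2) = 2 := by
    rw [show (1 - 2*1 + 5*1^2 : ℝ) = 2^2 by norm_num, Real.sqrt_sq (by norm_num)]
  unfold calH
  rw [h4]
  have h1 : ((1:ℝ) + 1 + 2) / (1 - 1 + 2) = 2 := by norm_num
  have h2 : ((1:ℝ) + 3*1^2 + (1+1)*2) / (1 - 1 + 2) = 2^2 := by norm_num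
  rw [h1, h2, Real.log_pow]
  push_cast
  ring

/-- The key numerical bound. -/
lemma calH_val : 253/1000 < calH (1479/2000 : ℝ) := by
  have hqeq : (1 - 2*(1479/2000:ℝ) + 5*(1479/2000)^2) = 1804241/800000 := by norm_num
  unfold calH
  rw [hqeq]
  set s : ℝ := Real.sqrt (1804241/800000) with hs
  have hs1 : (93860377731/62500000000 : ℝ) ≤ s := by
    rw [show (93860377731/62500000000:ℝ) = Real.sqrt ((93860377731/62500000000)^2) from
      (Real.sqrt_sq (by norm_num)).symm]
    exact Real.sqrt_le_sqrt (by norm_num)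
  have hs2 : s ≤ (93860377732/62500000000 : ℝ) := by
    rw [show (93860377732/62500000000:ℝ) = Real.sqrt ((93860377732/62500000000)^2) from
      (Real.sqrt_sq (by norm_num)).symm]
    exact Real.sqrt_le_sqrt (by norm_num)
  have hden : (0:ℝ) < 1 - 1479/2000 + s := by
    have : (1:ℝ) ≤ s := le_trans (by norm_num) hs1
    linarith
  -- bound on the second log argument
  have hR2 : (919630170279/500000000000 : ℝ) ≤ (1 + 1479/2000 + s) / (1 - 1479/2000 + s) := by
    rw [le_div_iff₀ hden]
    nlinarith [hs2]
  -- bound on the third log argument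
  have hR3 : (1 + 3*(1479/2000:ℝ)^2 + (1479/2000 + 1) * s) / (1 - 1479/2000 + s)
      ≤ (2980766043697/1000000000000 : ℝ) := by
    rw [div_le_iff₀ hden]
    nlinarith [hs1]
  have hR3pos : (0:ℝ) < (1 + 3*(1479/2000:ℝ)^2 + (1479/2000 + 1) * s) / (1 - 1479/2000 + s) := by
    apply div_pos ?_ hden
    have : (0:ℝ) ≤ s := Real.sqrt_nonneg _
    nlinarith
  -- first log: log(521/2000) = - log(2000/521)
  have hlog1 : Real.log (1 - 1479/2000 : ℝ) = -Real.log (2000/521 : ℝ) := by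
    rw [show (1 - 1479/2000:ℝ) = (2000/521:ℝ)⁻¹ by norm_num, Real.log_inv]
  have hL1 : (13451493/10000000 : ℝ) ≤ Real.log (2000/521 : ℝ) := by
    refine le_trans (by norm_num) (log_ge_cert (r := 62829270671/62500000000) (by norm_num) (by norm_num))
  have hL2 : (6093632/10000000 : ℝ) ≤ Real.log ((1 + 1479/2000 + s) / (1 - 1479/2000 + s)) := by
    refine le_trans ?_ (Real.log_le_log (by norm_num) hR2)
    refine le_trans (by norm_num) (log_ge_cert (r := 200476632281/200000000000) (by norm_num) (by norm_num))
  have hL3 : Real.log ((1 + 3*(1479/2000:ℝ)^2 + (1479/2000 + 1) * s) / (1 - 1479/2000 + s))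
      ≤ (10921837/10000000 : ℝ) := by
    refine le_trans (Real.log_le_log hR3pos hR3) ?_
    refine le_trans (log_le_cert (r := 1004275443151/1000000000000) (by norm_num) (by norm_num) (by norm_num)) (by norm_num)
  rw [hlog1]
  nlinarith [hL1, hL2, hL3]

/-- `𝓗(0+) = 𝓗(1-) = 0`, and `𝓗` attains on `(0,1)` a maximum value greater than `0.253`. -/
theorem calH_limits_and_max :
    Filter.Tendsto calH (nhdsWithin 0 (Set.Ioi 0)) (nhds 0) ∧
    Filter.Tendsto calH (nhdsWithin 1 (Set.Iio 1)) (nhds 0) ∧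
    ∃ ξmax ∈ Set.Ioo (0:ℝ) 1,
      (∀ ξ ∈ Set.Ioo (0:ℝ) 1, calH ξ ≤ calH ξmax) ∧ 0.253 < calH ξmax := by
  have h0 : Filter.Tendsto calH (nhdsWithin 0 (Set.Ioi 0)) (nhds 0) := by
    have := (calH_contAt (le_refl 0) (by norm_num)).continuousWithinAt (s := Set.Ioi (0:ℝ))
    rwa [ContinuousWithinAt, calH_zero] at this
  have h1 : Filter.Tendsto calH (nhdsWithin 1 (Set.Iio 1)) (nhds 0) := by
    have := (calH_contAt (by norm_num) (le_refl 1)).continuousWithinAt (s := Set.Iio (1:ℝ))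
    rwa [ContinuousWithinAt, calH_one] at this
  refine ⟨h0, h1, ?_⟩
  have hval : (253/1000 : ℝ) < calH (1479/2000) := calH_val
  obtain ⟨a, ha0, ha⟩ := ((nhdsGT_basis (0:ℝ)).eventually_iff).1
    (h0.eventually_lt_const (by norm_num : (0:ℝ) < 253/1000))
  obtain ⟨b, hb1, hb⟩ := ((nhdsLT_basis (1:ℝ)).eventually_iff).1
    (h1.eventually_lt_const (by norm_num : (0:ℝ) < 253/1000))
  set a' : ℝ := min a (1479/2000) with ha'
  set b' : ℝ := max b (1479/2000) with hb'
  have ha'0 : 0 < a' := lt_min ha0 (by norm_num)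
  have hb'1 : b' < 1 := max_lt hb1 (by norm_num)
  have hξ0 : (1479/2000:ℝ) ∈ Set.Icc a' b' := ⟨min_le_right _ _, le_max_right _ _⟩
  have hcont : ContinuousOn calH (Set.Icc a' b') := fun x hx =>
    (calH_contAt (le_trans ha'0.le hx.1) (le_trans hx.2 hb'1.le)).continuousWithinAt
  obtain ⟨m, hmK, hmax⟩ := isCompact_Icc.exists_isMaxOn ⟨_, hξ0⟩ hcont
  have hmax' : ∀ x ∈ Set.Icc a' b', calH x ≤ calH m := fun x hx => hmax hx
  have hm0 : calH (1479/2000) ≤ calH m := hmax' _ hξ0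
  refine ⟨m, ⟨lt_of_lt_of_le ha'0 hmK.1, lt_of_le_of_lt hmK.2 hb'1⟩, ?_, by
    norm_num at hval ⊢; linarith⟩
  intro ξ hξ
  rcases lt_or_ge ξ a' with h | h
  · have : calH ξ < 253/1000 := ha ⟨hξ.1, lt_of_lt_of_le h (min_le_left _ _)⟩
    linarith
  rcases le_or_gt ξ b' with h2 | h2
  · exact hmax' ξ ⟨h, h2⟩
  · have : calH ξ < 253/1000 := hb ⟨lt_of_le_of_lt (le_max_left _ _) h2, hξ.2⟩
    linarith
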